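/- For every positive integer n, r_n > (1/12)/(n + (1/30)/n), and moreover (1/12)/(n + (1/30)/n) > (1/12)/(n + n/(30n² - 1)), so this lower bound improves Nanjundiah's lower bound. -/

import Mathlib

/-!
Since `r_n = log (stirlingSeq n) - log √π`, Mathlib's series for
`log (stirlingSeq n / stirlingSeq (n+1))` gives `r_n - r_{n+1} = ∑_{k ≥ 1} (2n+1)^(-2k) / (2k+1)`.
Its first three terms already exceed `b(n) - b(n+1)` for `b(x) = (1/12)/(x + (1/30)/x)`, so
`r_n - b(n)` is strictly decreasing; as it tends to `0`, it is positive. The comparison with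
Nanjundiah's bound is `1/(30x) < x/(30x² - 1)`.
-/

/-- Error term in Stirling's formula: `n! = √(2π) n^(n+1/2) e^(-n) e^(r_n)`. -/
noncomputable def stirlingErr (n : ℕ) : ℝ :=
  Real.log (n.factorial) - ((n : ℝ) + 1/2) * Real.log n + n - Real.log (Real.sqrt (2 * Real.pi))

open Filter Topology Real

noncomputable def stirlingLowerBound (x : ℝ) : ℝ := (1 / 12) / (x + (1 / 30) / x)

lemma stirlingErr_eq_log_stirlingSeq_sub {n : ℕ} (hn : n ≠ 0) :
    stirlingErr n = log (Stirling.stirlingSeq n) - log √π := by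
  have hn' : (n : ℝ) ≠ 0 := by exact_mod_cast hn
  rw [Stirling.log_stirlingSeq_formula, stirlingErr, log_mul two_ne_zero hn',
    log_div hn' (exp_ne_zero 1), log_exp, log_sqrt pi_pos.le, log_sqrt (by positivity),
    log_mul two_ne_zero pi_ne_zero]
  ring

lemma tendsto_stirlingErr_atTop : Tendsto stirlingErr atTop (𝓝 0) := by
  have h := (Stirling.tendsto_stirlingSeq_sqrt_pi.log (sqrt_pos.2 pi_pos).ne').sub_const (log √π)
  rw [sub_self] at h
  refine h.congr' ?_
  filter_upwards [eventually_ne_atTop 0] with n hn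
  exact (stirlingErr_eq_log_stirlingSeq_sub hn).symm

lemma stirlingErr_sub_stirlingErr_succ_ge (n : ℕ) (hn : n ≠ 0) :
    (2 * n + 1 : ℝ)⁻¹ ^ 2 / 3 + (2 * n + 1 : ℝ)⁻¹ ^ 4 / 5 + (2 * n + 1 : ℝ)⁻¹ ^ 6 / 7 ≤
      stirlingErr n - stirlingErr (n + 1) := by
  obtain ⟨m, rfl⟩ := Nat.exists_eq_add_one_of_ne_zero hn
  calc _ = ∑ k ∈ Finset.range 3,
        (1 : ℝ) / (2 * ↑(k + 1) + 1) * ((1 / (2 * ↑(m + 1) + 1)) ^ 2) ^ (k + 1) := by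
        simp only [Finset.sum_range_succ, Finset.sum_range_zero]
        push_cast
        ring
    _ ≤ log (Stirling.stirlingSeq (m + 1)) - log (Stirling.stirlingSeq (m + 2)) :=
        sum_le_hasSum _ (fun k _ => by positivity) (Stirling.log_stirlingSeq_sdiff_hasSum m)
    _ = _ := by
        rw [stirlingErr_eq_log_stirlingSeq_sub hn,
          stirlingErr_eq_log_stirlingSeq_sub (by omega : m + 1 + 1 ≠ 0)]
        ring

lemma stirlingLowerBound_sub_stirlingLowerBound_add_one_lt {x : ℝ} (hx : 0 < x) :
    stirlingLowerBound x - stirlingLowerBound (x + 1) <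
      (2 * x + 1)⁻¹ ^ 2 / 3 + (2 * x + 1)⁻¹ ^ 4 / 5 + (2 * x + 1)⁻¹ ^ 6 / 7 := by
  unfold stirlingLowerBound
  rw [← sub_pos]
  field_simp
  ring_nf
  -- after clearing denominators every coefficient of the numerator is positive
  positivity

lemma tendsto_stirlingLowerBound_atTop : Tendsto stirlingLowerBound atTop (𝓝 0) :=
  tendsto_const_nhds.div_atTop <|
    tendsto_id.atTop_add (tendsto_const_nhds.div_atTop tendsto_id)

lemma stirlingLowerBound_lt_stirlingErr {n : ℕ} (hn : n ≠ 0) :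
    stirlingLowerBound n < stirlingErr n := by
  set gap : ℕ → ℝ := fun k => stirlingErr (k + 1) - stirlingLowerBound (k + 1)
  have gap_strictAnti : StrictAnti gap := strictAnti_nat_of_succ_lt fun k => by
    have hr := stirlingErr_sub_stirlingErr_succ_ge (k + 1) k.succ_ne_zero
    have ha :=
      stirlingLowerBound_sub_stirlingLowerBound_add_one_lt (x := (k + 1 : ℕ)) (by positivity)
    simp only [gap]
    push_cast at hr ha ⊢
    linarith
  have gap_tendsto : Tendsto gap atTop (𝓝 0) := by
    have := (tendsto_stirlingErr_atTop.sub
      (tendsto_stirlingLowerBound_atTop.comp tendsto_natCast_atTop_atTop)).comp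
      (tendsto_add_atTop_nat 1)
    rw [sub_zero] at this
    exact this.congr fun k => by simp [gap]
  obtain ⟨m, rfl⟩ := Nat.exists_eq_add_one_of_ne_zero hn
  have gap_pos : 0 < gap m := (gap_strictAnti.antitone.le_of_tendsto gap_tendsto (m + 1)).trans_lt
    (gap_strictAnti m.lt_succ_self)
  simp only [gap] at gap_pos
  push_cast
  linarith

lemma nanjundiah_lt_stirlingLowerBound {x : ℝ} (hx : 0 < x) (hx' : 1 < 30 * x ^ 2) :
    (1 / 12) / (x + x / (30 * x ^ 2 - 1)) < stirlingLowerBound x := by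
  have h : (1 / 30) / x < x / (30 * x ^ 2 - 1) := by
    rw [div_lt_div_iff₀ hx (by linarith)]
    linarith
  exact div_lt_div_of_pos_left (by norm_num) (by positivity) (by linarith)

/-- `r_n > (1/12)/(n + (1/30)/n)`, a lower bound improving Nanjundiah's
`(1/12)/(n + n/(30n² - 1))`. -/
theorem stirlingErr_lower_bound_k3 (n : ℕ) (hn : 0 < n) :
    stirlingErr n > (1/12) / ((n : ℝ) + (1/30) / n) ∧
      (1/12) / ((n : ℝ) + (1/30) / n) >
        (1/12) / ((n : ℝ) + (n : ℝ) / (30 * (n : ℝ)^2 - 1)) := by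
  have hx : (1 : ℝ) ≤ n := by exact_mod_cast hn
  exact ⟨stirlingLowerBound_lt_stirlingErr hn.ne',
    nanjundiah_lt_stirlingLowerBound (by positivity) (by nlinarith)⟩
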